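/- arXiv:1909.08122 — 2 statements merged into one kernel-verified Lean document; each statement's English description precedes it below -/
import Mathlib

section
/- Let n ≥ 2, let e₁ = (1,0,…,0) ∈ ℝⁿ and γ = (i, 1, 0, …, 0) ∈ ℂⁿ. There exist ε > 0 and C₁ > 0 such that for every a > 0 and every z ∈ ℂⁿ with |z − 2i a e₁| < 2εa, there exist ζ, η ∈ ℂⁿ with ζ·ζ = 0, η·η = 0, z = ζ + η, |ζ − aγ| < C₁ a ε, and |η + a γ̄| < C₁ a ε. -/
open MeasureTheory Metric Set Complex Filter

noncomputable section

/-- Euclidean space `ℝⁿ`. -/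
abbrev Euc (n : ℕ) := EuclideanSpace ℝ (Fin n)

variable {n : ℕ}

/-- The partial derivative `∂_{x_j} u (x)`. -/
def pd (u : Euc n → ℂ) (j : Fin n) (x : Euc n) : ℂ :=
  fderiv ℝ u x (EuclideanSpace.single j 1)

/-- The partial derivative within a set. -/
def pdW (s : Set (Euc n)) (u : Euc n → ℂ) (j : Fin n) (x : Euc n) : ℂ :=
  fderivWithin ℝ u s x (EuclideanSpace.single j 1)

/-- The Laplacian `Δu(x) = ∑_j ∂²u/∂x_j²`. -/
def lap (u : Euc n → ℂ) (x : Euc n) : ℂ := ∑ j : Fin n, pd (pd u j) j x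

/-- The Laplacian computed with derivatives within a set. -/
def lapW (s : Set (Euc n)) (u : Euc n → ℂ) (x : Euc n) : ℂ :=
  ∑ j : Fin n, pdW s (pdW s u j) j x

/-- `∇u·∇v = ∑_j ∂_j u ∂_j v` (bilinear scalar product of gradients). -/
def gradDot (u v : Euc n → ℂ) (x : Euc n) : ℂ := ∑ j : Fin n, pd u j x * pd v j x

/-- `∇u·∇v` with derivatives within a set. -/
def gradDotW (s : Set (Euc n)) (u v : Euc n → ℂ) (x : Euc n) : ℂ :=
  ∑ j : Fin n, pdW s u j x * pdW s v j x

/-- `u ∈ C^∞(cl Ω)` and `u` harmonic in `Ω`. -/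
def IsHarmonicOnCl (Ω : Set (Euc n)) (u : Euc n → ℂ) : Prop :=
  ContDiffOn ℝ (⊤ : ℕ∞) u (closure Ω) ∧ ∀ x ∈ Ω, lap u x = 0

/-- `Ω` has `C^∞` boundary: near each boundary point there is a smooth defining
function with nonvanishing differential. -/
def HasSmoothBoundary (Ω : Set (Euc n)) : Prop :=
  ∀ x ∈ frontier Ω, ∃ (U : Set (Euc n)) (ρ : Euc n → ℝ), IsOpen U ∧ x ∈ U ∧
    ContDiff ℝ (⊤ : ℕ∞) ρ ∧ (∀ y ∈ U, fderiv ℝ ρ y ≠ 0) ∧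
    Ω ∩ U = {y ∈ U | ρ y < 0} ∧ frontier Ω ∩ U = {y ∈ U | ρ y = 0}

/-- `Γ` is a relatively open subset of the set `F` (e.g. of the boundary `∂Ω`). -/
def RelOpenIn (Γ F : Set (Euc n)) : Prop := Γ ⊆ F ∧ ∃ O : Set (Euc n), IsOpen O ∧ Γ = O ∩ F

/-- `U ⊆ Γ` has `C^∞` boundary as a subset of the hypersurface `Γ`: near each point of the
relative boundary of `U` in `Γ` there is a smooth defining function with nonvanishing
differential cutting `U` out of `Γ`. -/
def HasSmoothRelBoundary (Γ U : Set (Euc n)) : Prop :=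
  ∀ x ∈ Γ ∩ closure U ∩ closure (Γ \ U), ∃ (W : Set (Euc n)) (ρ : Euc n → ℝ),
    IsOpen W ∧ x ∈ W ∧ ContDiff ℝ (⊤ : ℕ∞) ρ ∧ (∀ y ∈ W, fderiv ℝ ρ y ≠ 0) ∧
    U ∩ W = {y ∈ Γ ∩ W | ρ y < 0}

/-- Sup norm over a set. -/
def supNorm (s : Set (Euc n)) (u : Euc n → ℂ) : ℝ := sSup ((fun x => ‖u x‖) '' s)

/-- Hölder seminorm of exponent `α` over a set. -/
def holderSemi (α : ℝ) (s : Set (Euc n)) (u : Euc n → ℂ) : ℝ :=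
  sSup ({0} ∪ (fun p : Euc n × Euc n => ‖u p.1 - u p.2‖ / dist p.1 p.2 ^ α) ''
    {p : Euc n × Euc n | p.1 ∈ s ∧ p.2 ∈ s ∧ p.1 ≠ p.2})

/-- The `C^α` (Hölder) norm on a set. -/
def cαNorm (α : ℝ) (s : Set (Euc n)) (u : Euc n → ℂ) : ℝ := holderSemi α s u + supNorm s u

/-- Membership in the Hölder space `C^α(s)`. -/
def MemHolderOn (α : ℝ) (s : Set (Euc n)) (u : Euc n → ℂ) : Prop :=
  ContinuousOn u s ∧ ∃ L : ℝ, ∀ x ∈ s, ∀ y ∈ s, ‖u x - u y‖ ≤ L * dist x y ^ α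

/-- The `C^{2,α}` norm on a set: Hölder seminorms of the second derivatives plus sup norm. -/
def c2αNorm (α : ℝ) (s : Set (Euc n)) (u : Euc n → ℂ) : ℝ :=
  (∑ j : Fin n, ∑ k : Fin n, holderSemi α s (pdW s (pdW s u j) k)) + supNorm s u

/-- Membership in `C^{2,α}(s)`. -/
def MemC2Holder (α : ℝ) (s : Set (Euc n)) (u : Euc n → ℂ) : Prop :=
  ContDiffOn ℝ 2 u s ∧ ∃ L : ℝ, ∀ j k : Fin n, ∀ x ∈ s, ∀ y ∈ s,
    ‖pdW s (pdW s u j) k x - pdW s (pdW s u j) k y‖ ≤ L * dist x y ^ α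

/-- `f ∈ C^{2,α}(∂Ω)`: `f` is the boundary restriction of a `C^{2,α}(cl Ω)` function. -/
def MemC2HolderBdry (α : ℝ) (Ω : Set (Euc n)) (f : Euc n → ℂ) : Prop :=
  ∃ F : Euc n → ℂ, MemC2Holder α (closure Ω) F ∧ ∀ x ∈ frontier Ω, F x = f x

/-- The `C^{2,α}(∂Ω)` norm, as the infimum of the `C^{2,α}(cl Ω)` norms of all extensions. -/
def c2αBdryNorm (α : ℝ) (Ω : Set (Euc n)) (f : Euc n → ℂ) : ℝ :=
  sInf {c : ℝ | ∃ F : Euc n → ℂ, MemC2Holder α (closure Ω) F ∧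
    (∀ x ∈ frontier Ω, F x = f x) ∧ c = c2αNorm α (closure Ω) F}

/-- The `L²(Ω)` norm. -/
def L2norm (Ω : Set (Euc n)) (u : Euc n → ℂ) : ℝ := Real.sqrt (∫ x in Ω, ‖u x‖ ^ 2)

/-- The `L²(Ω)` norm of the gradient. -/
def L2gradNorm (Ω : Set (Euc n)) (u : Euc n → ℂ) : ℝ :=
  Real.sqrt (∫ x in Ω, ∑ j : Fin n, ‖pd u j x‖ ^ 2)

/-- The `L^∞(Ω)` norm. -/
def LinfNorm (Ω : Set (Euc n)) (f : Euc n → ℂ) : ℝ :=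
  (eLpNorm f ⊤ (volume.restrict Ω)).toReal

/-- Hermitian norm on `ℂⁿ`. -/
def hnormC (ζ : Fin n → ℂ) : ℝ := Real.sqrt (∑ j : Fin n, ‖ζ j‖ ^ 2)

/-- `|Im ζ'|`: the norm of the imaginary part of `(ζ₂,…,ζ_n)`. -/
def imTail (ζ : Fin n → ℂ) : ℝ :=
  Real.sqrt (∑ j : Fin n, if (j : ℕ) = 0 then 0 else (ζ j).im ^ 2)

/-- `x·ζ = ∑_j x_j ζ_j` for `x ∈ ℝⁿ`, `ζ ∈ ℂⁿ`. -/
def dotRC (x : Euc n) (ζ : Fin n → ℂ) : ℂ := ∑ j : Fin n, (x j : ℂ) * ζ j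

/-- The first coordinate vector `e₁ = (1,0,…,0) ∈ ℝⁿ`. -/
def e1 (n : ℕ) : Euc n :=
  (WithLp.equiv 2 (Fin n → ℝ)).symm (fun j => if (j : ℕ) = 0 then 1 else 0)

/-- `γ = (i,1,0,…,0) ∈ ℂⁿ`. -/
def gamC (n : ℕ) : Fin n → ℂ :=
  fun j => if (j : ℕ) = 0 then Complex.I else if (j : ℕ) = 1 then 1 else 0

/-! If `z·v = 0` and `μ² (v·v) = -z·z`, then `z = (z + μv)/2 + (z - μv)/2` splits `z` into two
null vectors. Take `v = (z₂, -z₁, 0, …, 0)`, so that `v·v = z₁² + z₂²`, and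
`μ = i (z·z / (z₁² + z₂²))^{1/2}`. At `z = 2i e₁` the ratio under the root is `1` and the
splitting is exactly `γ + (-γ̄)`; since the principal root is continuous at `1`, the splitting
stays close to it near `2i e₁`, and homogeneity of degree one gives the estimate for every
`a > 0`. -/

theorem sum_sq_add_mul_eq_zero {ι R : Type*} [Fintype ι] [CommRing R] (z v : ι → R) (c : R)
    (hzv : ∑ j, z j * v j = 0) (hc : c ^ 2 * ∑ j, v j ^ 2 = -∑ j, z j ^ 2) :
    ∑ j, (z j + c * v j) ^ 2 = 0 := by
  have hexp : ∀ j, (z j + c * v j) ^ 2 = z j ^ 2 + 2 * c * (z j * v j) + c ^ 2 * v j ^ 2 :=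
    fun j => by ring
  simp only [hexp, Finset.sum_add_distrib, ← Finset.mul_sum, hzv, hc]
  ring

theorem hnormC_eq_norm (u : Fin n → ℂ) :
    hnormC u = ‖(WithLp.toLp 2 u : EuclideanSpace ℂ (Fin n))‖ := by
  rw [EuclideanSpace.norm_eq]
  rfl

theorem continuous_hnormC : Continuous (hnormC (n := n)) := by
  simp only [funext hnormC_eq_norm]
  exact (PiLp.continuous_toLp 2 _).norm

theorem hnormC_const_mul (c : ℂ) (u : Fin n → ℂ) :
    hnormC (fun j => c * u j) = ‖c‖ * hnormC u := by
  simp only [hnormC_eq_norm, ← norm_smul, ← WithLp.toLp_smul]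
  rfl

theorem hnormC_ofReal_mul {a : ℝ} (ha : 0 ≤ a) (u : Fin n → ℂ) :
    hnormC (fun j => (a : ℂ) * u j) = a * hnormC u := by
  rw [hnormC_const_mul, Complex.norm_of_nonneg ha]

theorem dist_le_hnormC (z w : Fin n → ℂ) : dist z w ≤ hnormC (fun j => z j - w j) := by
  rw [hnormC_eq_norm]
  refine (dist_pi_le_iff (norm_nonneg _)).2 fun j => ?_
  rw [Complex.dist_eq]
  exact PiLp.norm_apply_le (WithLp.toLp 2 fun j => z j - w j) j

open Topology

section Splitting

variable {m : ℕ}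

def perpVec (z : Fin (m + 2) → ℂ) : Fin (m + 2) → ℂ :=
  fun j => if j = 0 then z 1 else if j = 1 then -z 0 else 0

def splitCoeff (z : Fin (m + 2) → ℂ) : ℂ :=
  I * ((∑ j, z j ^ 2) / (z 0 ^ 2 + z 1 ^ 2)) ^ (2⁻¹ : ℂ)

def nullPart (s : ℂ) (z : Fin (m + 2) → ℂ) : Fin (m + 2) → ℂ :=
  fun j => (z j + s * splitCoeff z * perpVec z j) / 2

theorem sum_mul_perpVec (z : Fin (m + 2) → ℂ) : ∑ j, z j * perpVec z j = 0 := by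
  simp [Fin.sum_univ_succ, perpVec, Fin.succ_ne_zero, Fin.succ_succ_ne_one]
  ring

theorem sum_perpVec_sq (z : Fin (m + 2) → ℂ) : ∑ j, perpVec z j ^ 2 = z 0 ^ 2 + z 1 ^ 2 := by
  simp [Fin.sum_univ_succ, perpVec, Fin.succ_ne_zero, Fin.succ_succ_ne_one]
  ring

theorem splitCoeff_sq_mul (z : Fin (m + 2) → ℂ) (hz : z 0 ^ 2 + z 1 ^ 2 ≠ 0) :
    splitCoeff z ^ 2 * (z 0 ^ 2 + z 1 ^ 2) = -∑ j, z j ^ 2 := by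
  rw [splitCoeff, mul_pow, cpow_ofNat_inv_pow, I_sq, neg_one_mul, neg_mul, div_mul_cancel₀ _ hz]

theorem sum_nullPart_sq {s : ℂ} (hs : s ^ 2 = 1) (z : Fin (m + 2) → ℂ)
    (hz : z 0 ^ 2 + z 1 ^ 2 ≠ 0) : ∑ j, nullPart s z j ^ 2 = 0 := by
  have h := sum_sq_add_mul_eq_zero z (perpVec z) (s * splitCoeff z) (sum_mul_perpVec z)
    (by rw [sum_perpVec_sq, mul_pow, hs, one_mul, splitCoeff_sq_mul z hz])
  simp only [nullPart, div_pow, ← Finset.sum_div, h, zero_div]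

theorem nullPart_one_add_nullPart_neg_one (z : Fin (m + 2) → ℂ) (j : Fin (m + 2)) :
    nullPart 1 z j + nullPart (-1) z j = z j := by
  simp only [nullPart]
  ring

def basePt (m : ℕ) : Fin (m + 2) → ℂ := fun j => if (j : ℕ) = 0 then 2 * I else 0

theorem splitCoeff_basePt : splitCoeff (basePt m) = I := by
  simp [splitCoeff, basePt]

theorem nullPart_one_basePt : nullPart 1 (basePt m) = gamC (m + 2) := by
  funext j
  refine Fin.cases ?_ (Fin.cases ?_ fun k => ?_) j <;>
    simp [nullPart, splitCoeff_basePt, perpVec, basePt, gamC, Fin.succ_ne_zero, Fin.succ_succ_ne_one]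
  ring_nf
  simp

theorem nullPart_neg_one_basePt :
    nullPart (-1) (basePt m) = fun j => -starRingEnd ℂ (gamC (m + 2) j) := by
  funext j
  refine Fin.cases ?_ (Fin.cases ?_ fun k => ?_) j <;>
    simp [nullPart, splitCoeff_basePt, perpVec, basePt, gamC, Fin.succ_ne_zero, Fin.succ_succ_ne_one]
  ring_nf
  simp

theorem continuousAt_splitCoeff : ContinuousAt splitCoeff (basePt m) := by
  have hd : basePt m 0 ^ 2 + basePt m 1 ^ 2 ≠ 0 := by simp [basePt]
  have hslit : (∑ j, basePt m j ^ 2) / (basePt m 0 ^ 2 + basePt m 1 ^ 2) ∈ slitPlane := by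
    simp [basePt]
  unfold splitCoeff
  fun_prop (disch := assumption)

theorem continuousAt_nullPart (s : ℂ) : ContinuousAt (nullPart s) (basePt m) := by
  have hv : ∀ j, Continuous fun z : Fin (m + 2) → ℂ => perpVec z j := fun j => by
    unfold perpVec
    split_ifs <;> fun_prop
  exact continuousAt_pi.2 fun j => ((continuous_apply j).continuousAt.add
    ((continuousAt_const.mul continuousAt_splitCoeff).mul (hv j).continuousAt)).div_const 2

theorem eventually_exists_nullSplit : ∀ᶠ z in 𝓝 (basePt m), ∃ ζ η : Fin (m + 2) → ℂ,
    ∑ j, ζ j ^ 2 = 0 ∧ ∑ j, η j ^ 2 = 0 ∧ (∀ j, z j = ζ j + η j) ∧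
      hnormC (fun j => ζ j - gamC (m + 2) j) < 1 ∧
      hnormC (fun j => η j + starRingEnd ℂ (gamC (m + 2) j)) < 1 := by
  have hd : ∀ᶠ z in 𝓝 (basePt m), z 0 ^ 2 + z 1 ^ 2 ≠ 0 :=
    ContinuousAt.eventually_ne (by fun_prop) (by simp [basePt])
  have hζ : ∀ᶠ z in 𝓝 (basePt m), hnormC (fun j => nullPart 1 z j - gamC (m + 2) j) < 1 := by
    refine ContinuousAt.eventually_lt (continuous_hnormC.continuousAt.comp
      ((continuousAt_nullPart 1).sub continuousAt_const)) continuousAt_const ?_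
    simp [nullPart_one_basePt, hnormC]
  have hη : ∀ᶠ z in 𝓝 (basePt m),
      hnormC (fun j => nullPart (-1) z j + starRingEnd ℂ (gamC (m + 2) j)) < 1 := by
    refine ContinuousAt.eventually_lt (continuous_hnormC.continuousAt.comp
      ((continuousAt_nullPart (-1)).add continuousAt_const)) continuousAt_const ?_
    simp [nullPart_neg_one_basePt, hnormC]
  filter_upwards [hd, hζ, hη] with z hz hζz hηz
  exact ⟨nullPart 1 z, nullPart (-1) z, sum_nullPart_sq (one_pow 2) z hz,
    sum_nullPart_sq (by norm_num) z hz, fun j => (nullPart_one_add_nullPart_neg_one z j).symm,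
    hζz, hηz⟩

theorem hnormC_sub_ofReal_mul_basePt {a : ℝ} (ha : 0 < a) (z : Fin (m + 2) → ℂ) :
    hnormC (fun j => z j - if (j : ℕ) = 0 then 2 * I * a else 0) =
      a * hnormC (fun j => (a : ℂ)⁻¹ * z j - basePt m j) := by
  have ha' : (a : ℂ) ≠ 0 := by exact_mod_cast ha.ne'
  rw [← hnormC_ofReal_mul ha.le]
  congr 1
  funext j
  simp only [basePt, mul_sub, mul_inv_cancel_left₀ ha']
  split_ifs <;> ring

end Splitting

theorem stmt6 (n : ℕ) (hn : 2 ≤ n) :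
    ∃ ε > 0, ∃ C₁ > 0, ∀ a : ℝ, 0 < a → ∀ z : Fin n → ℂ,
      hnormC (fun j => z j - (if (j : ℕ) = 0 then 2 * Complex.I * a else 0)) < 2 * ε * a →
      ∃ ζ η : Fin n → ℂ, (∑ j : Fin n, ζ j ^ 2) = 0 ∧ (∑ j : Fin n, η j ^ 2) = 0 ∧
        (∀ j, z j = ζ j + η j) ∧
        hnormC (fun j => ζ j - a * gamC n j) < C₁ * a * ε ∧
        hnormC (fun j => η j + a * (starRingEnd ℂ) (gamC n j)) < C₁ * a * ε := by
  obtain ⟨m, rfl⟩ := Nat.exists_eq_add_of_le' hn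
  obtain ⟨δ, hδ, hsplit⟩ := Metric.eventually_nhds_iff.1 (eventually_exists_nullSplit (m := m))
  refine ⟨δ / 2, by positivity, 2 / δ, by positivity, fun a ha z hz => ?_⟩
  have hC : 2 / δ * a * (δ / 2) = a * 1 := by field_simp
  have hw : dist (fun j => (a : ℂ)⁻¹ * z j) (basePt m) < δ := by
    rw [hnormC_sub_ofReal_mul_basePt ha] at hz
    exact (dist_le_hnormC _ _).trans_lt (by nlinarith)
  obtain ⟨ζ, η, hζ, hη, hsum, hζγ, hηγ⟩ := hsplit hw
  refine ⟨fun j => a * ζ j, fun j => a * η j, ?_, ?_, fun j => ?_, ?_, ?_⟩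
  · simp only [mul_pow, ← Finset.mul_sum, hζ, mul_zero]
  · simp only [mul_pow, ← Finset.mul_sum, hη, mul_zero]
  · rw [← mul_add, ← hsum, mul_inv_cancel_left₀ (by exact_mod_cast ha.ne')]
  · simp only [← mul_sub, hnormC_ofReal_mul ha.le, hC]
    exact mul_lt_mul_of_pos_left hζγ ha
  · simp only [← mul_add, hnormC_ofReal_mul ha.le, hC]
    exact mul_lt_mul_of_pos_left hηγ ha
end
end

section
/- Let Ω ⊂ ℝⁿ, n ≥ 2, be a bounded open set with C^∞ boundary, 0 < α < 1, q ∈ C^α(cl Ω), and let V: cl Ω × ℂ → ℂ be such that z ↦ V(·,z) is holomorphic from ℂ into C^α(cl Ω) and V(x,0) = 0 for all x ∈ cl Ω. Then the map F: C^{2,α}(∂Ω) × C^{2,α}(cl Ω) → C^α(cl Ω) × C^{2,α}(∂Ω) defined by F(f,u) = (−Δu + q (∇u)² + V(·,u), u|_{∂Ω} − f) is holomorphic (i.e. analytic as a map between complex Banach spaces). -/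
open MeasureTheory Metric Set Complex Filter

noncomputable section

variable {n : ℕ}

/-!
Along a complex line `(f, u) = (f₀ + λ g, u₀ + λ v)`, at each point the second component of `F`
is affine in `λ` and the first is a quadratic polynomial in `λ` plus `V(x, u₀(x) + λ v(x))`, hence
entire. This needs the derivatives within `cl Ω` to be linear, i.e. `cl Ω` to be a set of unique
differentiability: at a boundary point every direction `ξ` with `dρ ξ < 0` is tangent to `cl Ω`.

Local boundedness comes from sup/Hölder bounds that are uniform for `|λ| ≤ R`. Such bounds add
and multiply; `V(·, w)` is handled by the Cauchy estimate for `z ↦ V(x, z)`; and first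
derivatives of `C^{2,α}` functions are `C^α` because two nearby points of `cl Ω` are joined in
`cl Ω` by a three-segment path of comparable length, obtained by pushing both points inward
along a direction transversal to `∂Ω`.
-/

theorem exists_holder_of_lipschitz_near {X G : Type*} [PseudoMetricSpace X]
    [SeminormedAddCommGroup G] {t : Set X} {f : X → G} {α δ L S : ℝ} (hα0 : 0 < α)
    (hα1 : α ≤ 1) (hδ : 0 < δ)
    (hnear : ∀ x ∈ t, ∀ y ∈ t, dist x y < δ → ‖f x - f y‖ ≤ L * dist x y)
    (hS : ∀ x ∈ t, ‖f x‖ ≤ S) :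
    ∃ H, ∀ x ∈ t, ∀ y ∈ t, ‖f x - f y‖ ≤ H * dist x y ^ α := by
  refine ⟨max L 0 * δ ^ (1 - α) + 2 * max S 0 / δ ^ α, fun x hx y hy => ?_⟩
  have hd := dist_nonneg (x := x) (y := y)
  have hδα : 0 < δ ^ α := Real.rpow_pos_of_pos hδ α
  rcases lt_or_ge (dist x y) δ with hlt | hge
  · have hsplit : dist x y = dist x y ^ α * dist x y ^ (1 - α) := by
      rw [← Real.rpow_add' hd (by norm_num), add_sub_cancel, Real.rpow_one]
    calc ‖f x - f y‖ ≤ max L 0 * (dist x y ^ α * dist x y ^ (1 - α)) := by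
          rw [← hsplit]
          exact (hnear x hx y hy hlt).trans (by gcongr; exact le_max_left _ _)
      _ ≤ max L 0 * δ ^ (1 - α) * dist x y ^ α := by
          rw [mul_comm (dist x y ^ α), ← mul_assoc]
          gcongr
      _ ≤ _ := by gcongr; exact le_add_of_nonneg_right (by positivity)
  · calc ‖f x - f y‖ ≤ 2 * max S 0 / δ ^ α * δ ^ α := by
          rw [div_mul_cancel₀ _ hδα.ne']
          linarith [norm_sub_le (f x) (f y), hS x hx, hS y hy, le_max_left S 0]
      _ ≤ 2 * max S 0 / δ ^ α * dist x y ^ α := by gcongr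
      _ ≤ _ := by gcongr; exact le_add_of_nonneg_left (by positivity)

section

variable {E F : Type*} [NormedAddCommGroup E] [NormedSpace ℝ E] [NormedAddCommGroup F]
  [NormedSpace ℝ F] {s : Set E} {C D : ℝ} {x y : E}

def JoinedByChain (s : Set E) (C : ℝ) (x y : E) : Prop :=
  ∃ a b, segment ℝ x a ⊆ s ∧ segment ℝ a b ⊆ s ∧ segment ℝ b y ⊆ s ∧
    dist x a + dist a b + dist b y ≤ C * dist x y

def LocallyJoinedByChains (s : Set E) : Prop :=
  ∀ x₀ ∈ s, ∃ r > 0, ∃ C, ∀ x ∈ s ∩ ball x₀ r, ∀ y ∈ s ∩ ball x₀ r, JoinedByChain s C x y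

theorem joinedByChain_self (hx : x ∈ s) (C : ℝ) : JoinedByChain s C x x :=
  ⟨x, x, by simpa using hx, by simpa using hx, by simpa using hx, by simp⟩

theorem JoinedByChain.mono (h : JoinedByChain s C x y) (hCD : C ≤ D) : JoinedByChain s D x y := by
  obtain ⟨a, b, hxa, hab, hby, hlen⟩ := h
  exact ⟨a, b, hxa, hab, hby, hlen.trans (mul_le_mul_of_nonneg_right hCD dist_nonneg)⟩

theorem norm_sub_le_of_segment_subset {f : E → F} (hf : DifferentiableOn ℝ f s)
    (hD : ∀ z ∈ s, ‖fderivWithin ℝ f s z‖ ≤ D) {p q : E} (hpq : segment ℝ p q ⊆ s) :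
    ‖f p - f q‖ ≤ D * dist p q := by
  rw [dist_eq_norm]
  exact (convex_segment p q).norm_image_sub_le_of_norm_hasFDerivWithin_le
    (fun z hz => ((hf z (hpq hz)).hasFDerivWithinAt).mono hpq) (fun z hz => hD z (hpq hz))
    (right_mem_segment ℝ p q) (left_mem_segment ℝ p q)

theorem JoinedByChain.norm_sub_le {f : E → F} (h : JoinedByChain s C x y)
    (hf : DifferentiableOn ℝ f s) (hD : ∀ z ∈ s, ‖fderivWithin ℝ f s z‖ ≤ D) :
    ‖f x - f y‖ ≤ D * C * dist x y := by
  obtain ⟨a, b, hxa, hab, hby, hlen⟩ := h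
  have hD0 : 0 ≤ D := (norm_nonneg _).trans (hD x (hxa (left_mem_segment ℝ x a)))
  calc ‖f x - f y‖ ≤ ‖f x - f a‖ + ‖f a - f b‖ + ‖f b - f y‖ := by
          simpa only [dist_eq_norm] using dist_triangle4 (f x) (f a) (f b) (f y)
    _ ≤ D * dist x a + D * dist a b + D * dist b y := by
        gcongr <;> exact norm_sub_le_of_segment_subset hf hD ‹_›
    _ ≤ D * C * dist x y := by nlinarith

theorem IsCompact.exists_joinedByChain (hK : IsCompact s) (hloc : LocallyJoinedByChains s) :
    ∃ δ > 0, ∃ C, ∀ x ∈ s, ∀ y ∈ s, dist x y < δ → JoinedByChain s C x y := by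
  choose! r hr C hC using hloc
  obtain ⟨t, ht⟩ := hK.elim_finite_subcover (fun p : s => ball (p : E) (r p))
    (fun _ => isOpen_ball) fun x hx => mem_iUnion.2 ⟨⟨x, hx⟩, mem_ball_self (hr x hx)⟩
  obtain ⟨δ, hδ, hleb⟩ := lebesgue_number_lemma_of_metric hK
    (c := fun p : t => ball ((p : s) : E) (r p)) (fun _ => isOpen_ball)
    (by simpa only [iUnion_subtype, Finset.mem_coe] using ht)
  obtain ⟨M, hM⟩ := Finite.exists_le fun p : t => C p
  refine ⟨δ, hδ, M, fun x hx y hy hxy => ?_⟩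
  obtain ⟨p, hp⟩ := hleb x hx
  exact (hC _ (p : s).2 x ⟨hx, hp (mem_ball_self hδ)⟩ y
    ⟨hy, hp (by rwa [mem_ball, dist_comm])⟩).mono (hM p)

theorem exists_holder_of_contDiffOn {f : E → F} {α : ℝ} (hK : IsCompact s)
    (hs : UniqueDiffOn ℝ s) (hloc : LocallyJoinedByChains s) (hα0 : 0 < α) (hα1 : α ≤ 1)
    (hf : ContDiffOn ℝ 1 f s) : ∃ H, ∀ x ∈ s, ∀ y ∈ s, ‖f x - f y‖ ≤ H * dist x y ^ α := by
  obtain ⟨δ, hδ, C, hC⟩ := hK.exists_joinedByChain hloc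
  obtain ⟨D, hD⟩ := hK.exists_bound_of_continuousOn (hf.continuousOn_fderivWithin hs le_rfl)
  obtain ⟨S, hS⟩ := hK.exists_bound_of_continuousOn hf.continuousOn
  exact exists_holder_of_lipschitz_near hα0 hα1 hδ
    (fun x hx y hy hxy => (hC x hx y hy hxy).norm_sub_le (hf.differentiableOn one_ne_zero) hD) hS

end

section

variable {E : Type*} [NormedAddCommGroup E] [NormedSpace ℝ E]
  {Ω W : Set E} {ρ : E → ℝ} {ξ : E} {c L : ℝ}

/-- The local picture of `Ω` near a boundary point, given by a defining function `ρ` and an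
inward direction `ξ`. -/
structure DescentChart (Ω W : Set E) (ρ : E → ℝ) (ξ : E) (c L : ℝ) : Prop where
  convex : Convex ℝ W
  pos : 0 < c
  mem_of_neg : ∀ z ∈ W, ρ z < 0 → z ∈ Ω
  nonpos : ∀ z ∈ closure Ω ∩ W, ρ z ≤ 0
  descent : ∀ z ∈ W, ∀ t : ℝ, 0 ≤ t → z + t • ξ ∈ W → ρ (z + t • ξ) ≤ ρ z - c * t
  le_add_dist : ∀ z₁ ∈ W, ∀ z₂ ∈ W, ρ z₁ ≤ ρ z₂ + L * dist z₁ z₂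

namespace DescentChart

variable (h : DescentChart Ω W ρ ξ c L)
include h

theorem segment_subset_closure {m : E} (hm : m ∈ closure Ω) (hmW : m ∈ W) {d : ℝ}
    (hd : 0 ≤ d) (hmd : m + d • ξ ∈ W) : segment ℝ m (m + d • ξ) ⊆ closure Ω := by
  intro z hz
  rw [segment_eq_image'] at hz
  obtain ⟨θ, hθ, rfl⟩ := hz
  simp only [add_sub_cancel_left, smul_smul]
  rcases (mul_nonneg hθ.1 hd).eq_or_lt with h0 | hpos
  · rwa [← h0, zero_smul, add_zero]
  have hW : m + (θ * d) • ξ ∈ W := by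
    rw [← smul_smul]; exact h.convex.add_smul_mem hmW hmd hθ
  apply subset_closure
  refine h.mem_of_neg _ hW ?_
  linarith [h.descent m hmW _ hpos.le hW, h.nonpos m ⟨hm, hmW⟩, mul_pos h.pos hpos]

theorem add_smul_mem {x y m : E} (hx : x ∈ closure Ω) (hxW : x ∈ W) (hyW : y ∈ W)
    (hm : m ∈ segment ℝ x y) (hL : 0 ≤ L) {d : ℝ} (hd : 0 ≤ d) (hmd : m + d • ξ ∈ W)
    (hLd : L * dist x y < c * d) : m + d • ξ ∈ Ω := by
  have hmW : m ∈ W := h.convex.segment_subset hxW hyW hm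
  have hmx : dist m x ≤ dist x y := by
    rw [dist_comm, ← dist_add_dist_of_mem_segment hm]; exact le_add_of_nonneg_right dist_nonneg
  refine h.mem_of_neg _ hmd ?_
  nlinarith [h.descent m hmW d hd hmd, h.le_add_dist m hmW x hxW, h.nonpos x ⟨hx, hxW⟩]

-- The chain is `x → x + dξ → y + dξ → y` with `d = (L / c + 1) * dist x y`: at depth `d` the
-- descent `c * d` beats the growth `L * dist x y` of `ρ` along `[x, y]`.
theorem joinedByChain (hL : 0 ≤ L) {x y : E} (hx : x ∈ closure Ω) (hy : y ∈ closure Ω)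
    (hxW : x ∈ W) (hyW : y ∈ W) (hxd : x + ((L / c + 1) * dist x y) • ξ ∈ W)
    (hyd : y + ((L / c + 1) * dist x y) • ξ ∈ W) :
    JoinedByChain (closure Ω) (2 * (L / c + 1) * ‖ξ‖ + 1) x y := by
  rcases eq_or_ne x y with rfl | hxy
  · exact joinedByChain_self hx _
  set d := (L / c + 1) * dist x y with hd_def
  have hc := h.pos
  have hd : 0 ≤ d := by positivity
  refine ⟨x + d • ξ, y + d • ξ, h.segment_subset_closure hx hxW hd hxd, ?_, ?_, ?_⟩
  · intro z hz
    have hzW := h.convex.segment_subset hxd hyd hz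
    rw [add_comm x, add_comm y, ← segment_translate_image] at hz
    obtain ⟨m, hm, rfl⟩ := hz
    dsimp only at hzW ⊢
    rw [add_comm] at hzW ⊢
    refine subset_closure (h.add_smul_mem hx hxW hyW hm hL hd hzW ?_)
    have hxy' := dist_pos.2 hxy
    rw [hd_def, ← mul_assoc, mul_add, mul_div_cancel₀ _ hc.ne']
    linarith [mul_pos hc hxy']
  · rw [segment_symm]; exact h.segment_subset_closure hy hyW hd hyd
  · rw [dist_comm x, dist_self_add_left, dist_add_right, dist_self_add_left, norm_smul,
      Real.norm_of_nonneg hd, hd_def]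
    exact le_of_eq (by ring)

end DescentChart

end

section

variable {E : Type*} [NormedAddCommGroup E] [NormedSpace ℝ E]

theorem exists_descentChart_of_hasStrictFDerivAt {Ω U : Set E} {ρ : E → ℝ} {ℓ : E →L[ℝ] ℝ} {x₀ ξ : E}
    (hU : IsOpen U) (hx₀ : x₀ ∈ U) (hρc : Continuous ρ) (hΩU : Ω ∩ U = {y ∈ U | ρ y < 0})
    (hρ : HasStrictFDerivAt ρ ℓ x₀) (hξ : ℓ ξ < 0) :
    ∃ r > 0, ∃ c L, 0 ≤ L ∧ DescentChart Ω (ball x₀ r) ρ ξ c L := by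
  set c := -ℓ ξ / 2 with hc_def
  have hc : 0 < c := by linarith
  have hξ0 : 0 < ‖ξ‖ := norm_pos_iff.2 fun h => by simp [h] at hξ
  set ε : NNReal := ⟨c / ‖ξ‖, by positivity⟩
  obtain ⟨s, hs, happrox⟩ := hρ.approximates_deriv_on_nhds (c := ε) (Or.inr (by
    change (0 : ℝ) < c / ‖ξ‖; positivity))
  obtain ⟨r, hr, hball⟩ := Metric.mem_nhds_iff.1 (inter_mem hs (hU.mem_nhds hx₀))
  have hnonpos : closure Ω ∩ U ⊆ {y | ρ y ≤ 0} := by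
    rw [inter_comm]
    refine hU.inter_closure.trans ((closure_mono fun y hy => ?_).trans
      (closure_lt_subset_le hρc continuous_const))
    rw [inter_comm, hΩU] at hy
    exact hy.2
  refine ⟨r, hr, c, ‖ℓ‖ + ε, by positivity, convex_ball _ _, hc, fun z hz hρz => ?_,
    fun z hz => hnonpos ⟨hz.1, (hball hz.2).2⟩, fun z hz t ht hzt => ?_,
    fun z₁ hz₁ z₂ hz₂ => ?_⟩
  · have : z ∈ Ω ∩ U := by rw [hΩU]; exact ⟨(hball hz).2, hρz⟩
    exact this.1
  · have := (Real.le_norm_self _).trans (happrox _ (hball hzt).1 _ (hball hz).1)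
    rw [add_sub_cancel_left, map_smul, smul_eq_mul, norm_smul,
      Real.norm_of_nonneg ht] at this
    change _ ≤ c / ‖ξ‖ * (t * ‖ξ‖) at this
    rw [mul_left_comm, div_mul_cancel₀ _ hξ0.ne'] at this
    nlinarith
  · have h1 := (Real.le_norm_self _).trans (happrox _ (hball hz₁).1 _ (hball hz₂).1)
    have h2 := (Real.le_norm_self _).trans (ℓ.le_opNorm (z₁ - z₂))
    rw [dist_eq_norm]
    nlinarith

theorem ContinuousLinearMap.exists_apply_neg {ℓ : E →L[ℝ] ℝ} (hℓ : ℓ ≠ 0) : ∃ ξ, ℓ ξ < 0 := by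
  obtain ⟨w, hw⟩ : ∃ w, ℓ w ≠ 0 := by
    by_contra! h
    exact hℓ (ContinuousLinearMap.ext h)
  rcases hw.lt_or_gt with hneg | hpos
  · exact ⟨w, hneg⟩
  · exact ⟨-w, by simpa using hpos⟩

theorem uniqueDiffWithinAt_of_forall_segment_subset {s H : Set E} {x : E} (hH : IsOpen H)
    (hHne : H.Nonempty) (hx : x ∈ s)
    (hseg : ∀ ξ ∈ H, ∃ d : ℝ, 0 < d ∧ segment ℝ x (x + d • ξ) ⊆ s) :
    UniqueDiffWithinAt ℝ s x := by
  have hspan : H ⊆ Submodule.span ℝ (tangentConeAt ℝ s x) := by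
    intro ξ hξ
    obtain ⟨d, hd, hsub⟩ := hseg ξ hξ
    have hdξ := mem_tangentConeAt_of_segment_subset hsub
    rw [add_sub_cancel_left] at hdξ
    simpa [hd.ne'] using Submodule.smul_mem _ d⁻¹ (Submodule.subset_span hdξ)
  have htop : Submodule.span ℝ (tangentConeAt ℝ s x) = ⊤ :=
    Submodule.eq_top_of_nonempty_interior' _ (hHne.mono (interior_maximal hspan hH))
  rw [uniqueDiffWithinAt_iff, htop, Submodule.top_coe]
  exact ⟨dense_univ, subset_closure hx⟩

end

namespace HasSmoothBoundary

variable {Ω : Set (Euc n)}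

theorem exists_descentChart (hΩ : HasSmoothBoundary Ω) {x₀ : Euc n} (hx₀ : x₀ ∈ frontier Ω) :
    ∃ (ρ : Euc n → ℝ) (ℓ : Euc n →L[ℝ] ℝ), ℓ ≠ 0 ∧
      ∀ ξ, ℓ ξ < 0 → ∃ r > 0, ∃ c L, 0 ≤ L ∧ DescentChart Ω (ball x₀ r) ρ ξ c L := by
  obtain ⟨U, ρ, hU, hx₀U, hρ, hρ', hΩU, -⟩ := hΩ x₀ hx₀
  have hstrict : HasStrictFDerivAt ρ (fderiv ℝ ρ x₀) x₀ :=
    hρ.contDiffAt.hasStrictFDerivAt (by norm_num)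
  exact ⟨ρ, fderiv ℝ ρ x₀, hρ' x₀ hx₀U, fun ξ hξ =>
    exists_descentChart_of_hasStrictFDerivAt hU hx₀U hρ.continuous hΩU hstrict hξ⟩

theorem uniqueDiffOn_closure (hΩo : IsOpen Ω) (hΩ : HasSmoothBoundary Ω) :
    UniqueDiffOn ℝ (closure Ω) := by
  intro x hx
  rw [closure_eq_interior_union_frontier, hΩo.interior_eq] at hx
  rcases hx with hx | hx
  · exact uniqueDiffWithinAt_of_mem_nhds (mem_of_superset (hΩo.mem_nhds hx) subset_closure)
  obtain ⟨ρ, ℓ, hℓ, hchart⟩ := hΩ.exists_descentChart hx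
  refine uniqueDiffWithinAt_of_forall_segment_subset (isOpen_lt ℓ.continuous continuous_const)
    (ℓ.exists_apply_neg hℓ) (frontier_subset_closure hx) fun ξ hξ => ?_
  obtain ⟨r, hr, c, L, -, hch⟩ := hchart ξ hξ
  have hd : 0 < r / (‖ξ‖ + 1) := by positivity
  refine ⟨_, hd, hch.segment_subset_closure (frontier_subset_closure hx) (mem_ball_self hr)
    hd.le ?_⟩
  rw [mem_ball, dist_self_add_left, norm_smul, Real.norm_of_nonneg hd.le, div_mul_eq_mul_div,
    div_lt_iff₀ (by positivity)]
  nlinarith [norm_nonneg ξ]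

theorem locallyJoinedByChains (hΩo : IsOpen Ω) (hΩ : HasSmoothBoundary Ω) :
    LocallyJoinedByChains (closure Ω) := by
  intro x₀ hx₀
  rw [closure_eq_interior_union_frontier, hΩo.interior_eq] at hx₀
  rcases hx₀ with hx₀ | hx₀
  · obtain ⟨r, hr, hball⟩ := Metric.isOpen_iff.1 hΩo x₀ hx₀
    refine ⟨r, hr, 1, fun x hx y hy => ⟨x, y, ?_, ?_, ?_, by simp⟩⟩
    · simpa using hx.1
    · exact ((convex_ball x₀ r).segment_subset hx.2 hy.2).trans (hball.trans subset_closure)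
    · simpa using hy.1
  obtain ⟨ρ, ℓ, hℓ, hchart⟩ := hΩ.exists_descentChart hx₀
  obtain ⟨ξ, hξ⟩ := ℓ.exists_apply_neg hℓ
  obtain ⟨r₁, hr₁, c, L, hL, hch⟩ := hchart ξ hξ
  have hc := hch.pos
  have hξ0 : 0 < ‖ξ‖ := norm_pos_iff.2 fun h => by simp [h] at hξ
  set K := L / c + 1
  set r := r₁ / (1 + 2 * K * ‖ξ‖)
  have hr : 0 < r := by positivity
  have hr₁ : r * (1 + 2 * K * ‖ξ‖) = r₁ := div_mul_cancel₀ _ (by positivity)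
  have hrr₁ : r ≤ r₁ := by
    rw [← hr₁]; exact le_mul_of_one_le_right hr.le (le_add_of_nonneg_right (by positivity))
  have hshift : ∀ x y z, x ∈ ball x₀ r → y ∈ ball x₀ r → z ∈ ball x₀ r →
      z + (K * dist x y) • ξ ∈ ball x₀ r₁ := by
    intro x y z hx hy hz
    rw [mem_ball] at *
    have hxy : dist x y < 2 * r := by linarith [dist_triangle_right x y x₀]
    calc dist (z + (K * dist x y) • ξ) x₀ ≤ dist z x₀ + K * dist x y * ‖ξ‖ := by
          rw [← norm_smul_of_nonneg (by positivity)]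
          exact (dist_triangle _ z _).trans_eq (by rw [dist_self_add_left, add_comm])
      _ < r + K * (2 * r) * ‖ξ‖ := by gcongr
      _ = r₁ := by rw [← hr₁]; ring
  refine ⟨r, hr, _, fun x hx y hy => hch.joinedByChain hL hx.1 hy.1
    (ball_subset_ball hrr₁ hx.2) (ball_subset_ball hrr₁ hy.2)
    (hshift x y x hx.2 hy.2 hx.2) (hshift x y y hx.2 hy.2 hy.2)⟩

end HasSmoothBoundary

theorem Differentiable.norm_sub_le_of_norm_le {h : ℂ → ℂ} (hd : Differentiable ℂ h) {R M : ℝ}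
    (hM : ∀ z : ℂ, ‖z‖ ≤ R + 1 → ‖h z‖ ≤ M) {z₁ z₂ : ℂ} (h₁ : ‖z₁‖ ≤ R) (h₂ : ‖z₂‖ ≤ R) :
    ‖h z₁ - h z₂‖ ≤ M * ‖z₁ - z₂‖ := by
  have hderiv : ∀ z ∈ closedBall (0 : ℂ) R, ‖_root_.deriv h z‖ ≤ M := fun z hz => by
    simpa using Complex.norm_deriv_le_of_forall_mem_sphere_norm_le one_pos hd.diffContOnCl
      fun w hw => hM w (by
        rw [mem_sphere_iff_norm] at hw
        rw [mem_closedBall_zero_iff] at hz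
        linarith [norm_le_norm_add_norm_sub' w z])
  exact (convex_closedBall 0 R).norm_image_sub_le_of_norm_deriv_le (fun z _ => hd z) hderiv
    (mem_closedBall_zero_iff.2 h₂) (mem_closedBall_zero_iff.2 h₁)

section

variable {X : Type*} [PseudoMetricSpace X] {α : ℝ} {s : Set X} {C D : ℝ} {f g : X → ℂ}

structure HolderBound (α : ℝ) (s : Set X) (C : ℝ) (f : X → ℂ) : Prop where
  nonneg : 0 ≤ C
  norm_le : ∀ x ∈ s, ‖f x‖ ≤ C
  norm_sub_le : ∀ x ∈ s, ∀ y ∈ s, ‖f x - f y‖ ≤ C * dist x y ^ α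

namespace HolderBound

theorem congr (h : HolderBound α s C f) (hfg : ∀ x ∈ s, f x = g x) : HolderBound α s C g :=
  ⟨h.nonneg, fun x hx => hfg x hx ▸ h.norm_le x hx,
    fun x hx y hy => hfg x hx ▸ hfg y hy ▸ h.norm_sub_le x hx y hy⟩

theorem mono (h : HolderBound α s C f) (hCD : C ≤ D) : HolderBound α s D f :=
  ⟨h.nonneg.trans hCD, fun x hx => (h.norm_le x hx).trans hCD,
    fun x hx y hy => (h.norm_sub_le x hx y hy).trans (by gcongr)⟩

theorem neg (h : HolderBound α s C f) : HolderBound α s C (fun x => -f x) :=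
  ⟨h.nonneg, fun x hx => by simpa using h.norm_le x hx,
    fun x hx y hy => by rw [neg_sub_neg, norm_sub_rev]; exact h.norm_sub_le x hx y hy⟩

theorem add (hf : HolderBound α s C f) (hg : HolderBound α s D g) :
    HolderBound α s (C + D) (fun x => f x + g x) := by
  refine ⟨add_nonneg hf.nonneg hg.nonneg, fun x hx => ?_, fun x hx y hy => ?_⟩
  · exact (norm_add_le _ _).trans (add_le_add (hf.norm_le x hx) (hg.norm_le x hx))
  · calc ‖f x + g x - (f y + g y)‖ = ‖(f x - f y) + (g x - g y)‖ := by ring_nf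
      _ ≤ C * dist x y ^ α + D * dist x y ^ α :=
          (norm_add_le _ _).trans (add_le_add (hf.norm_sub_le x hx y hy) (hg.norm_sub_le x hx y hy))
      _ = (C + D) * dist x y ^ α := by ring

theorem const_mul (hf : HolderBound α s C f) {c : ℂ} {R : ℝ} (hc : ‖c‖ ≤ R) :
    HolderBound α s (R * C) (fun x => c * f x) := by
  have hR : 0 ≤ R := (norm_nonneg c).trans hc
  refine ⟨mul_nonneg hR hf.nonneg, fun x hx => ?_, fun x hx y hy => ?_⟩
  · rw [norm_mul]
    exact mul_le_mul hc (hf.norm_le x hx) (norm_nonneg _) hR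
  · rw [← mul_sub, norm_mul, mul_assoc]
    exact mul_le_mul hc (hf.norm_sub_le x hx y hy) (norm_nonneg _) hR

theorem mul (hf : HolderBound α s C f) (hg : HolderBound α s D g) :
    HolderBound α s (2 * C * D) (fun x => f x * g x) := by
  have hC := hf.nonneg
  have hD := hg.nonneg
  refine ⟨by positivity, fun x hx => ?_, fun x hx y hy => ?_⟩
  · rw [norm_mul]
    nlinarith [hf.norm_le x hx, hg.norm_le x hx, norm_nonneg (f x), norm_nonneg (g x)]
  · calc ‖f x * g x - f y * g y‖ ≤ ‖f x‖ * ‖g x - g y‖ + ‖f x - f y‖ * ‖g y‖ := by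
          rw [← norm_mul, ← norm_mul]
          exact (norm_add_le _ _).trans_eq' (by ring_nf)
      _ ≤ C * (D * dist x y ^ α) + C * dist x y ^ α * D := by
          gcongr
          exacts [hf.norm_le x hx, hg.norm_sub_le x hx y hy, hf.norm_sub_le x hx y hy,
            hg.norm_le y hy]
      _ = 2 * C * D * dist x y ^ α := by ring

theorem sum {ι : Type*} (t : Finset ι) {c : ι → ℝ} {F : ι → X → ℂ}
    (h : ∀ i ∈ t, HolderBound α s (c i) (F i)) :
    HolderBound α s (∑ i ∈ t, c i) (fun x => ∑ i ∈ t, F i x) := by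
  classical
  induction t using Finset.induction_on with
  | empty => exact ⟨le_rfl, fun x _ => by simp, fun x _ y _ => by simp⟩
  | insert i t hi ih =>
    simp only [Finset.sum_insert hi]
    exact (h i (t.mem_insert_self i)).add (ih fun j hj => h j (Finset.mem_insert_of_mem hj))

theorem comp_differentiable {V : X → ℂ → ℂ} {w : X → ℂ} {M : ℝ} (hw : HolderBound α s C w)
    (hV : ∀ x ∈ s, Differentiable ℂ (V x))
    (hVb : ∀ z : ℂ, ‖z‖ ≤ C + 1 → HolderBound α s M (fun x => V x z)) :
    HolderBound α s (M * (1 + C)) (fun x => V x (w x)) := by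
  have hC := hw.nonneg
  have hM := (hVb 0 (by simp; linarith)).nonneg
  have hwC : ∀ x ∈ s, ‖w x‖ ≤ C + 1 := fun x hx => by linarith [hw.norm_le x hx]
  refine ⟨by positivity, fun x hx => ?_, fun x hx y hy => ?_⟩
  · exact ((hVb _ (hwC x hx)).norm_le x hx).trans (le_mul_of_one_le_right hM (by linarith))
  · have hlip : ‖V y (w x) - V y (w y)‖ ≤ M * ‖w x - w y‖ :=
      (hV y hy).norm_sub_le_of_norm_le (fun z hz => (hVb z hz).norm_le y hy) (hw.norm_le x hx)
        (hw.norm_le y hy)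
    calc ‖V x (w x) - V y (w y)‖ ≤ ‖V x (w x) - V y (w x)‖ + ‖V y (w x) - V y (w y)‖ :=
          norm_sub_le_norm_sub_add_norm_sub _ _ _
      _ ≤ M * dist x y ^ α + M * (C * dist x y ^ α) :=
          add_le_add ((hVb _ (hwC x hx)).norm_sub_le x hx y hy)
            (hlip.trans (mul_le_mul_of_nonneg_left (hw.norm_sub_le x hx y hy) hM))
      _ = M * (1 + C) * dist x y ^ α := by ring

end HolderBound

theorem exists_holderBound (hK : IsCompact s) (hf : ContinuousOn f s) {L : ℝ}
    (hL : ∀ x ∈ s, ∀ y ∈ s, ‖f x - f y‖ ≤ L * dist x y ^ α) : ∃ C, HolderBound α s C f := by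
  obtain ⟨S, hS⟩ := hK.exists_bound_of_continuousOn hf
  refine ⟨max L 0 + max S 0, by positivity, fun x hx => ?_, fun x hx y hy => ?_⟩
  · linarith [hS x hx, le_max_left S 0, le_max_right L 0]
  · exact (hL x hx y hy).trans (by gcongr; linarith [le_max_left L 0, le_max_right S 0])

end

section

variable {α : ℝ} {s : Set (Euc n)} {C D : ℝ} {u v f : Euc n → ℂ}

theorem supNorm_nonneg (s : Set (Euc n)) (f : Euc n → ℂ) : 0 ≤ supNorm s f :=
  Real.sSup_nonneg (by rintro _ ⟨x, -, rfl⟩; exact norm_nonneg _)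

theorem holderSemi_nonneg (α : ℝ) (s : Set (Euc n)) (f : Euc n → ℂ) : 0 ≤ holderSemi α s f :=
  Real.sSup_nonneg' ⟨0, Or.inl rfl, le_rfl⟩

theorem c2αNorm_nonneg (α : ℝ) (s : Set (Euc n)) (f : Euc n → ℂ) : 0 ≤ c2αNorm α s f :=
  add_nonneg (Finset.sum_nonneg fun _ _ => Finset.sum_nonneg fun _ _ => holderSemi_nonneg _ _ _)
    (supNorm_nonneg s f)

theorem HolderBound.supNorm_le (h : HolderBound α s C f) : supNorm s f ≤ C :=
  Real.sSup_le (by rintro _ ⟨x, hx, rfl⟩; exact h.norm_le x hx) h.nonneg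

theorem HolderBound.holderSemi_le (h : HolderBound α s C f) : holderSemi α s f ≤ C := by
  refine Real.sSup_le ?_ h.nonneg
  rintro _ (rfl | ⟨⟨x, y⟩, ⟨hx, hy, hne⟩, rfl⟩)
  · exact h.nonneg
  · rw [div_le_iff₀ (Real.rpow_pos_of_pos (dist_pos.2 hne) α)]
    exact h.norm_sub_le x hx y hy

theorem HolderBound.cαNorm_le (h : HolderBound α s C f) : cαNorm α s f ≤ 2 * C := by
  rw [cαNorm, two_mul]
  exact add_le_add h.holderSemi_le h.supNorm_le

theorem HolderBound.of_cαNorm_le (hα0 : 0 < α) (hK : IsCompact s) (hf : MemHolderOn α s f)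
    {M : ℝ} (hM : cαNorm α s f ≤ M) : HolderBound α s M f := by
  obtain ⟨hfc, L, hL⟩ := hf
  have hsemi := holderSemi_nonneg α s f
  have hsup := supNorm_nonneg s f
  rw [cαNorm] at hM
  refine ⟨by linarith, fun x hx => ?_, fun x hx y hy => ?_⟩
  · obtain ⟨S, hS⟩ := hK.exists_bound_of_continuousOn hfc
    have := le_csSup ⟨S, by rintro _ ⟨y, hy, rfl⟩; exact hS y hy⟩ (mem_image_of_mem _ hx)
    exact this.trans (show supNorm s f ≤ M by linarith)
  · rcases eq_or_ne x y with rfl | hne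
    · simp [Real.zero_rpow hα0.ne']
    have hd : 0 < dist x y ^ α := Real.rpow_pos_of_pos (dist_pos.2 hne) α
    have hbdd : BddAbove ({0} ∪ (fun p : Euc n × Euc n => ‖f p.1 - f p.2‖ / dist p.1 p.2 ^ α) ''
        {p : Euc n × Euc n | p.1 ∈ s ∧ p.2 ∈ s ∧ p.1 ≠ p.2}) := by
      refine ⟨max L 0, ?_⟩
      rintro _ (rfl | ⟨⟨x', y'⟩, ⟨hx', hy', hne'⟩, rfl⟩)
      · exact le_max_right _ _
      · rw [div_le_iff₀ (Real.rpow_pos_of_pos (dist_pos.2 hne') α)]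
        exact (hL x' hx' y' hy').trans (by gcongr; exact le_max_left _ _)
    have := le_csSup hbdd (Or.inr ⟨(x, y), ⟨hx, hy, hne⟩, rfl⟩)
    rw [div_le_iff₀ hd] at this
    exact this.trans (mul_le_mul_of_nonneg_right (show holderSemi α s f ≤ M by linarith) hd.le)

theorem pdW_add_mul {x : Euc n} (hs : UniqueDiffWithinAt ℝ s x)
    (hu : DifferentiableWithinAt ℝ u s x) (hv : DifferentiableWithinAt ℝ v s x) (c : ℂ)
    (j : Fin n) : pdW s (fun y => u y + c * v y) j x = pdW s u j x + c * pdW s v j x := by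
  simp only [pdW, ← smul_eq_mul (a := c)]
  rw [fderivWithin_fun_add (g := fun y => c • v y) hs hu (hv.const_smul c),
    fderivWithin_fun_const_smul hs hv c]
  rfl

theorem pdW_congr {g : Euc n → ℂ} {x : Euc n} (hfg : ∀ y ∈ s, f y = g y) (hx : x ∈ s)
    (j : Fin n) : pdW s f j x = pdW s g j x := by
  rw [pdW, pdW, fderivWithin_congr hfg (hfg x hx)]

theorem contDiffOn_pdW (hs : UniqueDiffOn ℝ s) (hu : ContDiffOn ℝ 2 u s) (j : Fin n) :
    ContDiffOn ℝ 1 (pdW s u j) s :=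
  (hu.fderivWithin hs le_rfl).clm_apply contDiffOn_const

theorem continuousOn_pdW (hs : UniqueDiffOn ℝ s) (hu : ContDiffOn ℝ 1 u s) (j : Fin n) :
    ContinuousOn (pdW s u j) s :=
  (hu.continuousOn_fderivWithin hs le_rfl).clm_apply continuousOn_const

theorem pdW_pdW_add_mul (hs : UniqueDiffOn ℝ s) (hu : ContDiffOn ℝ 2 u s)
    (hv : ContDiffOn ℝ 2 v s) (c : ℂ) (j k : Fin n) {x : Euc n} (hx : x ∈ s) :
    pdW s (pdW s (fun y => u y + c * v y) j) k x =
      pdW s (pdW s u j) k x + c * pdW s (pdW s v j) k x := by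
  rw [pdW_congr (fun y hy => pdW_add_mul (hs y hy) (hu.differentiableOn two_ne_zero y hy)
    (hv.differentiableOn two_ne_zero y hy) c j) hx]
  exact pdW_add_mul (hs x hx) ((contDiffOn_pdW hs hu j).differentiableOn one_ne_zero x hx)
    ((contDiffOn_pdW hs hv j).differentiableOn one_ne_zero x hx) c k

structure C2HolderBound (α : ℝ) (s : Set (Euc n)) (C : ℝ) (u : Euc n → ℂ) : Prop where
  zeroth : HolderBound α s C u
  first : ∀ j, HolderBound α s C (pdW s u j)
  second : ∀ j k, HolderBound α s C (pdW s (pdW s u j) k)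

theorem MemC2Holder.exists_c2HolderBound (hK : IsCompact s) (hs : UniqueDiffOn ℝ s)
    (hC1 : ∀ f : Euc n → ℂ, ContDiffOn ℝ 1 f s →
      ∃ H, ∀ x ∈ s, ∀ y ∈ s, ‖f x - f y‖ ≤ H * dist x y ^ α)
    (hu : MemC2Holder α s u) : ∃ C, C2HolderBound α s C u := by
  obtain ⟨hu2, L, hL⟩ := hu
  have hbound : ∀ f, ContDiffOn ℝ 1 f s → ∃ C, HolderBound α s C f := fun f hf =>
    (hC1 f hf).elim fun _ hH => exists_holderBound hK hf.continuousOn hH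
  obtain ⟨C₀, h₀⟩ := hbound u (hu2.of_le one_le_two)
  choose C₁ h₁ using fun j => hbound _ (contDiffOn_pdW hs hu2 j)
  choose C₂ h₂ using fun j k =>
    exists_holderBound hK (continuousOn_pdW hs (contDiffOn_pdW hs hu2 j) k) (hL j k)
  obtain ⟨M₁, hM₁⟩ := Finite.exists_le C₁
  obtain ⟨M₂, hM₂⟩ := Finite.exists_le fun p : Fin n × Fin n => C₂ p.1 p.2
  exact ⟨max C₀ (max M₁ M₂), ⟨h₀.mono (le_max_left _ _),
    fun j => (h₁ j).mono ((hM₁ j).trans (le_max_of_le_right (le_max_left _ _))),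
    fun j k => (h₂ j k).mono ((hM₂ (j, k)).trans (le_max_of_le_right (le_max_right _ _)))⟩⟩

namespace C2HolderBound

theorem add_mul (hs : UniqueDiffOn ℝ s) (hu2 : ContDiffOn ℝ 2 u s) (hv2 : ContDiffOn ℝ 2 v s)
    (hu : C2HolderBound α s C u) (hv : C2HolderBound α s D v) {c : ℂ} {R : ℝ} (hc : ‖c‖ ≤ R) :
    C2HolderBound α s (C + R * D) (fun x => u x + c * v x) :=
  ⟨hu.zeroth.add (hv.zeroth.const_mul hc),
    fun j => (hu.first j).add ((hv.first j).const_mul hc) |>.congr fun x hx =>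
      (pdW_add_mul (hs x hx) (hu2.differentiableOn two_ne_zero x hx)
        (hv2.differentiableOn two_ne_zero x hx) c j).symm,
    fun j k => (hu.second j k).add ((hv.second j k).const_mul hc) |>.congr fun _ hx =>
      (pdW_pdW_add_mul hs hu2 hv2 c j k hx).symm⟩

theorem memC2Holder (h : C2HolderBound α s C u) (hu2 : ContDiffOn ℝ 2 u s) :
    MemC2Holder α s u :=
  ⟨hu2, C, fun j k => (h.second j k).norm_sub_le⟩

theorem c2αNorm_le (h : C2HolderBound α s C u) : c2αNorm α s u ≤ n * (n * C) + C := by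
  have hsum : ∑ j : Fin n, ∑ k : Fin n, holderSemi α s (pdW s (pdW s u j) k) ≤
      ∑ _j : Fin n, ∑ _k : Fin n, C :=
    Finset.sum_le_sum fun j _ => Finset.sum_le_sum fun k _ => (h.second j k).holderSemi_le
  simp only [Finset.sum_const, Finset.card_univ, Fintype.card_fin, nsmul_eq_mul] at hsum
  exact add_le_add hsum h.zeroth.supNorm_le

end C2HolderBound

end

section

variable {α : ℝ} {s : Set (Euc n)} {C : ℝ} {u v w : Euc n → ℂ} {q : Euc n → ℂ}
  {V : Euc n → ℂ → ℂ}

/-- The first component `-Δu + q (∇u)² + V(·, u)` of `F`, with derivatives taken within `s`. -/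
def pdeOp (s : Set (Euc n)) (q : Euc n → ℂ) (V : Euc n → ℂ → ℂ) (u : Euc n → ℂ)
    (x : Euc n) : ℂ :=
  -lapW s u x + q x * gradDotW s u u x + V x (u x)

theorem C2HolderBound.pdeOp {Cq M : ℝ} (hw : C2HolderBound α s C w)
    (hq : HolderBound α s Cq q) (hV : ∀ x ∈ s, Differentiable ℂ (V x))
    (hVb : ∀ z : ℂ, ‖z‖ ≤ C + 1 → HolderBound α s M (fun x => V x z)) :
    HolderBound α s (n * C + 2 * Cq * (n * (2 * C * C)) + M * (1 + C)) (pdeOp s q V w) := by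
  have hlap := HolderBound.sum Finset.univ fun j _ => hw.second j j
  have hgrad := HolderBound.sum Finset.univ fun j _ => (hw.first j).mul (hw.first j)
  simp only [Finset.sum_const, Finset.card_univ, Fintype.card_fin, nsmul_eq_mul] at hlap hgrad
  exact (hlap.neg.add (hq.mul hgrad)).add (hw.zeroth.comp_differentiable hV hVb)

theorem analyticAt_pdeOp_add_mul (hs : UniqueDiffOn ℝ s) (hu : ContDiffOn ℝ 2 u s)
    (hv : ContDiffOn ℝ 2 v s) {x : Euc n} (hx : x ∈ s) (hV : ∀ z, AnalyticAt ℂ (V x) z)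
    (lam₀ : ℂ) : AnalyticAt ℂ (fun lam : ℂ => pdeOp s q V (fun y => u y + lam * v y) x) lam₀ := by
  have hpd : ∀ (lam : ℂ) j,
      pdW s (fun y => u y + lam * v y) j x = pdW s u j x + lam * pdW s v j x :=
    fun lam j => pdW_add_mul (hs x hx) (hu.differentiableOn two_ne_zero x hx)
      (hv.differentiableOn two_ne_zero x hx) lam j
  simp only [pdeOp, lapW, gradDotW, hpd, pdW_pdW_add_mul hs hu hv _ _ _ hx]
  have := hV (u x + lam₀ * v x)
  fun_prop

theorem exists_cαNorm_pdeOp_add_mul_le {Cu Cv Cq R : ℝ} (hs : UniqueDiffOn ℝ s)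
    (hu2 : ContDiffOn ℝ 2 u s) (hv2 : ContDiffOn ℝ 2 v s) (hu : C2HolderBound α s Cu u)
    (hv : C2HolderBound α s Cv v) (hq : HolderBound α s Cq q)
    (hV : ∀ x ∈ s, Differentiable ℂ (V x))
    (hVb : ∀ r > 0, ∃ M, ∀ z : ℂ, ‖z‖ ≤ r → HolderBound α s M (fun x => V x z)) (hR : 0 ≤ R) :
    ∃ M, ∀ lam : ℂ, ‖lam‖ ≤ R → cαNorm α s (pdeOp s q V (fun y => u y + lam * v y)) ≤ M := by
  have := hu.zeroth.nonneg
  have := hv.zeroth.nonneg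
  obtain ⟨M, hM⟩ := hVb (Cu + R * Cv + 1) (by positivity)
  exact ⟨_, fun lam hlam => ((hu.add_mul hs hu2 hv2 hv hlam).pdeOp hq hV hM).cαNorm_le⟩

theorem c2αBdryNorm_le {Ω : Set (Euc n)} {f F : Euc n → ℂ} (hF : MemC2Holder α (closure Ω) F)
    (hFf : ∀ x ∈ frontier Ω, F x = f x) : c2αBdryNorm α Ω f ≤ c2αNorm α (closure Ω) F :=
  csInf_le ⟨0, by rintro _ ⟨G, -, -, rfl⟩; exact c2αNorm_nonneg α _ G⟩ ⟨F, hF, hFf, rfl⟩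

theorem exists_c2αBdryNorm_sub_le {Ω : Set (Euc n)} {f g F G : Euc n → ℂ} {Cu Cv CF CG : ℝ}
    (hs : UniqueDiffOn ℝ (closure Ω)) (hu2 : ContDiffOn ℝ 2 u (closure Ω))
    (hv2 : ContDiffOn ℝ 2 v (closure Ω)) (hF2 : ContDiffOn ℝ 2 F (closure Ω))
    (hG2 : ContDiffOn ℝ 2 G (closure Ω)) (hu : C2HolderBound α (closure Ω) Cu u)
    (hv : C2HolderBound α (closure Ω) Cv v) (hF : C2HolderBound α (closure Ω) CF F)
    (hG : C2HolderBound α (closure Ω) CG G) (hFf : ∀ x ∈ frontier Ω, F x = f x)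
    (hGg : ∀ x ∈ frontier Ω, G x = g x) (R : ℝ) :
    ∃ M, ∀ lam : ℂ, ‖lam‖ ≤ R →
      c2αBdryNorm α Ω (fun x => (u x + lam * v x) - (f x + lam * g x)) ≤ M := by
  set CH := Cu + R * Cv + 1 * (CF + R * CG)
  refine ⟨n * (n * CH) + CH, fun lam hlam => ?_⟩
  have hH := (hu.add_mul hs hu2 hv2 hv hlam).add_mul hs (by fun_prop) (by fun_prop)
    (hF.add_mul hs hF2 hG2 hG hlam) (c := -1) (R := 1) (by simp)
  refine (c2αBdryNorm_le (hH.memC2Holder (by fun_prop)) fun x hx => ?_).trans hH.c2αNorm_le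
  rw [hFf x hx, hGg x hx]
  ring

end

theorem stmt18_general {n : ℕ} (Ω : Set (Euc n)) (hΩo : IsOpen Ω)
    (hΩbd : Bornology.IsBounded Ω) (hΩsm : HasSmoothBoundary Ω)
    (α : ℝ) (hα0 : 0 < α) (hα1 : α < 1)
    (q : Euc n → ℂ) (hq : MemHolderOn α (closure Ω) q)
    (V : Euc n → ℂ → ℂ)
    (hVan : ∀ x ∈ closure Ω, ∀ z : ℂ, AnalyticAt ℂ (V x) z)
    (hVmem : ∀ z : ℂ, MemHolderOn α (closure Ω) (fun x => V x z))
    (hVbdd : ∀ R : ℝ, 0 < R → ∃ M : ℝ, ∀ z : ℂ, ‖z‖ ≤ R →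
      cαNorm α (closure Ω) (fun x => V x z) ≤ M) :
    ∀ f₀ g u₀ v : Euc n → ℂ,
      MemC2HolderBdry α Ω f₀ → MemC2HolderBdry α Ω g →
      MemC2Holder α (closure Ω) u₀ → MemC2Holder α (closure Ω) v →
      (∀ x ∈ closure Ω, ∀ lam₀ : ℂ,
        AnalyticAt ℂ (fun lam : ℂ =>
          -lapW (closure Ω) (fun y => u₀ y + lam * v y) x +
            q x * gradDotW (closure Ω) (fun y => u₀ y + lam * v y)
              (fun y => u₀ y + lam * v y) x +
            V x (u₀ x + lam * v x)) lam₀) ∧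
      (∀ x ∈ frontier Ω, ∀ lam₀ : ℂ,
        AnalyticAt ℂ (fun lam : ℂ => (u₀ x + lam * v x) - (f₀ x + lam * g x)) lam₀) ∧
      (∀ R : ℝ, 0 < R → ∃ M : ℝ, ∀ lam : ℂ, ‖lam‖ ≤ R →
        cαNorm α (closure Ω) (fun x =>
          -lapW (closure Ω) (fun y => u₀ y + lam * v y) x +
            q x * gradDotW (closure Ω) (fun y => u₀ y + lam * v y)
              (fun y => u₀ y + lam * v y) x +
            V x (u₀ x + lam * v x)) ≤ M ∧
        c2αBdryNorm α Ω (fun x => (u₀ x + lam * v x) - (f₀ x + lam * g x)) ≤ M) := by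
  intro f₀ g u₀ v ⟨F, hF, hFf⟩ ⟨G, hG, hGg⟩ hu hv
  obtain ⟨hqc, Lq, hLq⟩ := hq
  have hK : IsCompact (closure Ω) := hΩbd.isCompact_closure
  have hs : UniqueDiffOn ℝ (closure Ω) := hΩsm.uniqueDiffOn_closure hΩo
  have hC2 : ∀ w, MemC2Holder α (closure Ω) w → ∃ C, C2HolderBound α (closure Ω) C w :=
    fun w hw => hw.exists_c2HolderBound hK hs fun f hf => exists_holder_of_contDiffOn hK hs
      (hΩsm.locallyJoinedByChains hΩo) hα0 hα1.le hf
  refine ⟨fun x hx => analyticAt_pdeOp_add_mul hs hu.1 hv.1 hx (hVan x hx),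
    fun x _ lam₀ => by fun_prop, fun R hR => ?_⟩
  obtain ⟨Cu, hCu⟩ := hC2 u₀ hu
  obtain ⟨Cv, hCv⟩ := hC2 v hv
  obtain ⟨CF, hCF⟩ := hC2 F hF
  obtain ⟨CG, hCG⟩ := hC2 G hG
  obtain ⟨Cq, hCq⟩ := exists_holderBound hK hqc hLq
  obtain ⟨M₁, hM₁⟩ := exists_cαNorm_pdeOp_add_mul_le hs hu.1 hv.1 hCu hCv hCq
    (fun x hx z => (hVan x hx z).differentiableAt)
    (fun R hR => (hVbdd R hR).imp fun M hM z hz =>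
      .of_cαNorm_le hα0 hK (hVmem z) (hM z hz)) hR.le
  obtain ⟨M₂, hM₂⟩ := exists_c2αBdryNorm_sub_le hs hu.1 hv.1 hF.1 hG.1 hCu hCv hCF hCG hFf hGg R
  exact ⟨max M₁ M₂, fun lam hlam =>
    ⟨(hM₁ lam hlam).trans (le_max_left _ _), (hM₂ lam hlam).trans (le_max_right _ _)⟩⟩

theorem stmt18 {n : ℕ} (hn : 2 ≤ n) (Ω : Set (Euc n)) (hΩo : IsOpen Ω)
    (hΩbd : Bornology.IsBounded Ω) (hΩsm : HasSmoothBoundary Ω)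
    (α : ℝ) (hα0 : 0 < α) (hα1 : α < 1)
    (q : Euc n → ℂ) (hq : MemHolderOn α (closure Ω) q)
    (V : Euc n → ℂ → ℂ)
    (hVan : ∀ x ∈ closure Ω, ∀ z : ℂ, AnalyticAt ℂ (V x) z)
    (hVmem : ∀ z : ℂ, MemHolderOn α (closure Ω) (fun x => V x z))
    (hVbdd : ∀ R : ℝ, 0 < R → ∃ M : ℝ, ∀ z : ℂ, ‖z‖ ≤ R →
      cαNorm α (closure Ω) (fun x => V x z) ≤ M)
    (hV0 : ∀ x ∈ closure Ω, V x 0 = 0) :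
    ∀ f₀ g u₀ v : Euc n → ℂ,
      MemC2HolderBdry α Ω f₀ → MemC2HolderBdry α Ω g →
      MemC2Holder α (closure Ω) u₀ → MemC2Holder α (closure Ω) v →
      (∀ x ∈ closure Ω, ∀ lam₀ : ℂ,
        AnalyticAt ℂ (fun lam : ℂ =>
          -lapW (closure Ω) (fun y => u₀ y + lam * v y) x +
            q x * gradDotW (closure Ω) (fun y => u₀ y + lam * v y)
              (fun y => u₀ y + lam * v y) x +
            V x (u₀ x + lam * v x)) lam₀) ∧
      (∀ x ∈ frontier Ω, ∀ lam₀ : ℂ,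
        AnalyticAt ℂ (fun lam : ℂ => (u₀ x + lam * v x) - (f₀ x + lam * g x)) lam₀) ∧
      (∀ R : ℝ, 0 < R → ∃ M : ℝ, ∀ lam : ℂ, ‖lam‖ ≤ R →
        cαNorm α (closure Ω) (fun x =>
          -lapW (closure Ω) (fun y => u₀ y + lam * v y) x +
            q x * gradDotW (closure Ω) (fun y => u₀ y + lam * v y)
              (fun y => u₀ y + lam * v y) x +
            V x (u₀ x + lam * v x)) ≤ M ∧
        c2αBdryNorm α Ω (fun x => (u₀ x + lam * v x) - (f₀ x + lam * g x)) ≤ M) :=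
  stmt18_general Ω hΩo hΩbd hΩsm α hα0 hα1 q hq V hVan hVmem hVbdd
end
end
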